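/- For every dimension d ≥ 1 there exists a constant C_d ≥ 1, depending only on d, with the following property. Let (Ω, 𝒜, ℙ) be a probability space and X : Ω → (subsets of ℝ^d) a random set such that for every closed axis-aligned cube Q ⊆ ℝ^d of side length ℓ > 0 the set {ω : X(ω) ∩ Q = ∅} is measurable with ℙ(X ∩ Q = ∅) ≤ exp(−ℓ^d). Then for every h > 0 and all x, y ∈ ℝ^d with |x − y| ≥ h there exists a measurable event E ⊆ Ω with ℙ(E) ≤ (C_d|x − y|/h + 1)·exp(−(h/C_d)^d) such that for every ω ∉ E one has d_{h,X(ω)}(x,y) ≤ C_d|x − y|. -/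

import Mathlib

/-!
Place `m + 1` equally spaced points, `m = ⌈2|x - y|/h⌉`, on the segment from `x` to `y`, and
around each a cube of side `h / (2√d)`, which lies within `h / 4` of its centre. If `X` meets
every cube, one point of `X` from each cube gives an admissible path of `m` hops of length `≤ h`,
so of length `≤ 3|x - y|`. By the union bound some cube is missed with probability at most
`(m + 1) exp(-(h / (2√d))^d)`, so `C_d = 3√d` works.
-/

open scoped ENNReal

noncomputable section

/-- A point in Euclidean space `ℝ^d`. -/
abbrev Pt (d : ℕ) := EuclideanSpace ℝ (Fin d)

/-- `p = (p₀, …, p_m)` is an admissible path in `P` from `x` to `y` with step size `h`: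
all its points lie in `P`, the first point is within `h/2` of `x`, the last within `h/2`
of `y`, and consecutive points are at distance at most `h`. (A path with `m + 1` points
corresponds to a path with `m` elements in the paper, which is always nonempty.) -/
def IsPath {d : ℕ} (P : Set (Pt d)) (h : ℝ) (x y : Pt d) {m : ℕ}
    (p : Fin (m + 1) → Pt d) : Prop :=
  (∀ i, p i ∈ P) ∧ dist x (p 0) ≤ h / 2 ∧ dist y (p (Fin.last m)) ≤ h / 2 ∧
    ∀ i : Fin m, dist (p i.castSucc) (p i.succ) ≤ h

/-- The length `L(p)` of a path: the sum of the lengths of its hops. -/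
def pathLength {d m : ℕ} (p : Fin (m + 1) → Pt d) : ℝ :=
  ∑ i : Fin m, dist (p i.castSucc) (p i.succ)

/-- The distance `d_{h,P}(x,y) ∈ [0,∞]`: the infimum of the lengths of admissible
paths in `P` from `x` to `y` with step size `h` (equal to `+∞` if there is none). -/
def graphDist {d : ℕ} (P : Set (Pt d)) (h : ℝ) (x y : Pt d) : ℝ≥0∞ :=
  ⨅ (m : ℕ) (p : Fin (m + 1) → Pt d) (_ : IsPath P h x y p),
    ENNReal.ofReal (pathLength p)

open MeasureTheory

def cube {d : ℕ} (a : Pt d) (ℓ : ℝ) : Set (Pt d) :=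
  {z | ∀ i, z i ∈ Set.Icc (a i) (a i + ℓ)}

def centredCube {d : ℕ} (c : Pt d) (ℓ : ℝ) : Set (Pt d) :=
  cube (WithLp.toLp 2 fun i => c i - ℓ / 2) ℓ

lemma EuclideanSpace.dist_le_sqrt_card_mul {ι : Type*} [Fintype ι] {p c : EuclideanSpace ℝ ι}
    {r : ℝ} (hr : 0 ≤ r) (hp : ∀ i, |p i - c i| ≤ r) :
    dist p c ≤ √(Fintype.card ι) * r := by
  have hsum : ∑ i, dist (p i) (c i) ^ 2 ≤ Fintype.card ι * r ^ 2 := by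
    calc ∑ i, dist (p i) (c i) ^ 2 ≤ ∑ _i : ι, r ^ 2 :=
          Finset.sum_le_sum fun i _ => by
            rw [Real.dist_eq]
            exact pow_le_pow_left₀ (abs_nonneg _) (hp i) 2
      _ = Fintype.card ι * r ^ 2 := by simp
  calc dist p c = √(∑ i, dist (p i) (c i) ^ 2) := EuclideanSpace.dist_eq p c
    _ ≤ √(Fintype.card ι * r ^ 2) := Real.sqrt_le_sqrt hsum
    _ = √(Fintype.card ι) * r := by rw [Real.sqrt_mul (by positivity), Real.sqrt_sq hr]

lemma centredCube_subset_closedBall {d : ℕ} (c : Pt d) {ℓ : ℝ} (hℓ : 0 ≤ ℓ) :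
    centredCube c ℓ ⊆ Metric.closedBall c (√d * (ℓ / 2)) := by
  intro z hz
  have hz_near (i : Fin d) : |z i - c i| ≤ ℓ / 2 := by
    have := hz i
    simp only [Set.mem_Icc] at this
    rw [abs_le]
    constructor <;> linarith [this.1, this.2]
  simpa only [Metric.mem_closedBall, Fintype.card_fin] using
    EuclideanSpace.dist_le_sqrt_card_mul (by positivity) hz_near

section Paths

variable {d : ℕ} {P : Set (Pt d)} {h : ℝ} {x y : Pt d} {m : ℕ} {p : Fin (m + 1) → Pt d}

lemma graphDist_le_pathLength (hp : IsPath P h x y p) :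
    graphDist P h x y ≤ ENNReal.ofReal (pathLength p) :=
  iInf_le_of_le m (iInf_le_of_le p (iInf_le_of_le hp le_rfl))

lemma pathLength_le_of_isPath (hp : IsPath P h x y p) : pathLength p ≤ m * h := by
  calc pathLength p ≤ ∑ _i : Fin m, h := Finset.sum_le_sum fun i _ => hp.2.2.2 i
    _ = m * h := by simp

lemma graphDist_le_of_closedBall_inter_nonempty (hm : 0 < m) (hxy : dist x y ≤ m * (h / 2))
    (hP : ∀ k ≤ m,
      (P ∩ Metric.closedBall (AffineMap.lineMap x y ((k : ℝ) / m)) (h / 4)).Nonempty) :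
    graphDist P h x y ≤ ENNReal.ofReal (m * h) := by
  set z : ℕ → Pt d := fun k => AffineMap.lineMap x y ((k : ℝ) / m)
  choose p hpP hpz using fun k : Fin (m + 1) => hP k (Nat.lt_succ_iff.mp k.isLt)
  have hm' : (0 : ℝ) < m := Nat.cast_pos.mpr hm
  have hz_step (k : ℕ) : dist (z k) (z (k + 1)) ≤ h / 2 := by
    simp only [z, dist_lineMap_lineMap, Real.dist_eq]
    rw [show (k : ℝ) / m - ((k + 1 : ℕ) : ℝ) / m = -(1 / m) by push_cast; ring, abs_neg,
      abs_of_pos (by positivity), one_div_mul_eq_div, div_le_iff₀ hm']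
    linarith
  have hpath : IsPath P h x y p := by
    -- the endpoint bounds use `h ≥ 0`, which holds because the balls are nonempty
    refine ⟨hpP, ?_, ?_, fun i => ?_⟩
    · have := hpz 0
      simp only [Fin.val_zero, Nat.cast_zero, zero_div, AffineMap.lineMap_apply_zero,
        Metric.mem_closedBall] at this
      rw [dist_comm]; linarith [dist_nonneg (x := p 0) (y := x)]
    · have := hpz (Fin.last m)
      simp only [Fin.val_last, div_self hm'.ne', AffineMap.lineMap_apply_one,
        Metric.mem_closedBall] at this
      rw [dist_comm]; linarith [dist_nonneg (x := p (Fin.last m)) (y := y)]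
    · have h₁ := Metric.mem_closedBall.mp (hpz i.castSucc)
      have h₃ := Metric.mem_closedBall'.mp (hpz i.succ)
      have h₂ := hz_step i
      simp only [Fin.val_castSucc, Fin.val_succ] at h₁ h₃
      calc dist (p i.castSucc) (p i.succ)
          ≤ dist (p i.castSucc) (z i) + dist (z i) (z (i + 1)) + dist (z (i + 1)) (p i.succ) :=
            dist_triangle4 _ _ _ _
        _ ≤ h := by linarith
  exact (graphDist_le_pathLength hpath).trans
    (ENNReal.ofReal_le_ofReal (pathLength_le_of_isPath hpath))

def hopCount (x y : Pt d) (h : ℝ) : ℕ := ⌈2 * (dist x y / h)⌉₊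

lemma dist_le_hopCount_mul (hh : 0 < h) : dist x y ≤ hopCount x y h * (h / 2) :=
  calc dist x y = 2 * (dist x y / h) * (h / 2) := by field_simp
    _ ≤ hopCount x y h * (h / 2) := by gcongr; exact Nat.le_ceil _

lemma hopCount_pos (hh : 0 < h) (hxy : h ≤ dist x y) : 0 < hopCount x y h :=
  Nat.ceil_pos.mpr (by have := (one_le_div hh).mpr hxy; positivity)

lemma hopCount_le (hh : 0 < h) (hxy : h ≤ dist x y) :
    (hopCount x y h : ℝ) ≤ 3 * (dist x y / h) := by
  have := (one_le_div hh).mpr hxy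
  unfold hopCount
  linarith [Nat.ceil_lt_add_one (by positivity : (0 : ℝ) ≤ 2 * (dist x y / h))]

lemma graphDist_le_of_centredCube_inter_nonempty (hd : 0 < d) (hh : 0 < h) (hxy : h ≤ dist x y)
    (hP : ∀ k ≤ hopCount x y h, (P ∩ centredCube
      (AffineMap.lineMap x y ((k : ℝ) / hopCount x y h)) (h / (2 * √d))).Nonempty) :
    graphDist P h x y ≤ ENNReal.ofReal (3 * dist x y) := by
  have hsd : 0 < √(d : ℝ) := Real.sqrt_pos.mpr (Nat.cast_pos.mpr hd)
  have hradius : √d * (h / (2 * √d) / 2) = h / 4 := by field_simp; ring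
  have hball (k : ℕ) (hk : k ≤ hopCount x y h) :=
    (hP k hk).mono <| Set.inter_subset_inter_right _ <|
    hradius ▸ centredCube_subset_closedBall _ (by positivity)
  refine (graphDist_le_of_closedBall_inter_nonempty (hopCount_pos hh hxy)
    (dist_le_hopCount_mul hh) hball).trans (ENNReal.ofReal_le_ofReal ?_)
  calc (hopCount x y h : ℝ) * h ≤ 3 * (dist x y / h) * h := by gcongr; exact hopCount_le hh hxy
    _ = 3 * dist x y := by field_simp

end Paths

lemma measure_biUnion_range_le {Ω : Type*} [MeasurableSpace Ω] (μ : Measure Ω)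
    {A : ℕ → Set Ω} {ε : ℝ≥0∞} (hA : ∀ k, μ (A k) ≤ ε) (n : ℕ) :
    μ (⋃ k ∈ Finset.range n, A k) ≤ n * ε :=
  calc μ (⋃ k ∈ Finset.range n, A k) ≤ ∑ k ∈ Finset.range n, μ (A k) :=
        measure_biUnion_finset_le _ _
    _ ≤ ∑ _k ∈ Finset.range n, ε := Finset.sum_le_sum fun k _ => hA k
    _ = n * ε := by simp

/-- **High-probability upper bound.** For every dimension `d ≥ 1` there is a constant
`C_d ≥ 1`, depending only on `d`, such that: for every probability space and every
random set `X` in `ℝ^d` such that for every closed axis-aligned cube `Q` of side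
length `ℓ > 0` the event `{X ∩ Q = ∅}` is measurable with probability at most
`exp(-ℓ^d)`, and for every `h > 0` and all `x, y` with `|x - y| ≥ h`, there is a
measurable event `E` of probability at most `(C_d |x-y| / h + 1) exp(-(h/C_d)^d)`
outside of which `d_{h,X}(x,y) ≤ C_d |x - y|`. -/
theorem graphDist_upper_bound_whp :
    ∀ d : ℕ, 1 ≤ d → ∃ C : ℝ, 1 ≤ C ∧
      ∀ (Ω : Type) [MeasurableSpace Ω] (μ : Measure Ω), IsProbabilityMeasure μ →
      ∀ X : Ω → Set (Pt d),
        (∀ (a : Pt d) (ℓ : ℝ), 0 < ℓ →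
          MeasurableSet {ω | X ω ∩ {z : Pt d | ∀ i, z i ∈ Set.Icc (a i) (a i + ℓ)} = ∅} ∧
          μ {ω | X ω ∩ {z : Pt d | ∀ i, z i ∈ Set.Icc (a i) (a i + ℓ)} = ∅} ≤
            ENNReal.ofReal (Real.exp (-ℓ ^ d))) →
        ∀ (h : ℝ) (x y : Pt d), 0 < h → h ≤ dist x y →
          ∃ E : Set Ω, MeasurableSet E ∧
            μ E ≤ ENNReal.ofReal ((C * dist x y / h + 1) * Real.exp (-(h / C) ^ d)) ∧
            ∀ ω ∉ E, graphDist (X ω) h x y ≤ ENNReal.ofReal (C * dist x y) := by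
  intro d hd
  have hsd : 1 ≤ √(d : ℝ) := Real.one_le_sqrt.mpr (by exact_mod_cast hd)
  refine ⟨3 * √d, by linarith, fun Ω _ μ _ X hX h x y hh hxy => ?_⟩
  set m := hopCount x y h
  set Q : ℕ → Set (Pt d) := fun k =>
    centredCube (AffineMap.lineMap x y ((k : ℝ) / m)) (h / (2 * √d))
  have hℓ : 0 < h / (2 * √d) := div_pos hh (by linarith)
  refine ⟨⋃ k ∈ Finset.range (m + 1), {ω | X ω ∩ Q k = ∅},
    Finset.measurableSet_biUnion _ fun k _ => (hX _ _ hℓ).1, ?_, fun ω hω => ?_⟩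
  · calc _ ≤ ((m + 1 : ℕ) : ℝ≥0∞) * ENNReal.ofReal (Real.exp (-(h / (2 * √d)) ^ d)) :=
          measure_biUnion_range_le μ (fun k => (hX _ _ hℓ).2) _
      _ ≤ _ := by
        rw [← ENNReal.ofReal_natCast, ← ENNReal.ofReal_mul (by positivity)]
        refine ENNReal.ofReal_le_ofReal (mul_le_mul ?_ ?_ (by positivity) (by positivity))
        · have hconst : 3 * (dist x y / h) ≤ 3 * √d * dist x y / h := by
            rw [mul_div_assoc, mul_assoc]
            gcongr
            exact le_mul_of_one_le_left (by positivity) hsd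
          push_cast
          linarith [hopCount_le hh hxy]
        · gcongr
          norm_num
  · have hhit (k : ℕ) (hk : k ≤ m) : (X ω ∩ Q k).Nonempty := Set.nonempty_iff_ne_empty.mpr
      fun he => hω (Set.mem_biUnion (Finset.mem_range.mpr (Nat.lt_succ_of_le hk)) he)
    refine (graphDist_le_of_centredCube_inter_nonempty (by omega) hh hxy hhit).trans
      (ENNReal.ofReal_le_ofReal ?_)
    nlinarith [dist_nonneg (x := x) (y := y)]
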